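/- Let l1, l2, l3 > 0 with l1 + l2 + l3 = 1, l3 < l1, l3 < l2, and max(l1,l2) < τ ≤ 1/2; set r = 1/2 − τ. Let F' = F_{τ'}^{l1',l2',l3'} be the renormalized map, where l1' = (l1−l3)/(1−2*l3), l2' = (l2−l3)/(1−2*l3), l3' = l3/(1−2*l3) and τ' = (τ−l3)/(1−2*l3). Then F' admits a nonempty open arc I of ℝ/ℤ on which (F')² restricts to the identity if and only if l3 > 1/4 − r/2. -/

import Mathlib

open Set

noncomputable section

local instance : Fact ((0:ℝ) < 1) := ⟨one_pos⟩

/-- Representative in `[0,1)` of a point of the circle `ℝ/ℤ`. -/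
def rep (x : AddCircle (1:ℝ)) : ℝ := (AddCircle.equivIco 1 0 x : ℝ)

/-- Projection `ℝ → ℝ/ℤ`. -/
def toCirc (t : ℝ) : AddCircle (1:ℝ) := (t : AddCircle (1:ℝ))

/-- The fully flipped 3-interval exchange transformation `F_τ^{l1,l2,l3}`
(it depends only on `l1`, `l2`, `τ`, since `l3 = 1 - l1 - l2`). -/
def FF (l1 l2 τ : ℝ) (x : AddCircle (1:ℝ)) : AddCircle (1:ℝ) :=
  if rep x < l1 then toCirc (l1 - rep x + τ)
  else if rep x < l1 + l2 then toCirc (2*l1 + l2 - rep x + τ)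
  else toCirc (l1 + l2 + 1 - rep x + τ)

/-- A nonempty open arc of the circle `ℝ/ℤ`. -/
def IsOpenArc (I : Set (AddCircle (1:ℝ))) : Prop :=
  ∃ a b : ℝ, a < b ∧ b ≤ a + 1 ∧ I = toCirc '' Ioo a b

lemma rep_toCirc (t : ℝ) : rep (toCirc t) = Int.fract t := by
  simp [rep, toCirc, AddCircle.coe_equivIco_mk_apply]

lemma rep_mem (x : AddCircle (1:ℝ)) : rep x ∈ Ico (0:ℝ) 1 := by
  have := (AddCircle.equivIco 1 0 x).2
  simpa [rep] using this

/-- `FF` written uniformly as a reflection. -/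
lemma FF_eq (A B T : ℝ) (x : AddCircle (1:ℝ)) :
    FF A B T x =
      toCirc ((if rep x < A then A + T else if rep x < A + B then 2*A + B + T
        else A + B + 1 + T) - rep x) := by
  unfold FF
  split_ifs <;> congr 1 <;> ring

/-- Key single-point lemma: if `1 - A - B ≤ T`, any point of period dividing 2
has representative `1/2`. -/
lemma key (A B T : ℝ) (hA : 0 < A) (hB : 0 < B) (hAB : A + B < 1)
    (hTA : A < T) (hTB : B < T) (hT : T ≤ 1/2) (hTC : 1 - A - B ≤ T)
    (x : AddCircle (1:ℝ)) (hx : FF A B T (FF A B T x) = x) : rep x = 1/2 := by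
  set t := rep x with htdef
  obtain ⟨ht0, ht1⟩ := rep_mem x
  set K1 : ℝ := if t < A then A + T else if t < A + B then 2*A + B + T
      else A + B + 1 + T with hK1
  have hy : FF A B T x = toCirc (K1 - t) := FF_eq A B T x
  set t' := rep (FF A B T x) with ht'def
  obtain ⟨ht'0, ht'1⟩ := rep_mem (FF A B T x)
  have ht'f : t' = Int.fract (K1 - t) := by rw [ht'def, hy, rep_toCirc]
  have hm : ((⌊K1 - t⌋ : ℤ) : ℝ) = K1 - t - t' := by
    rw [ht'f]; exact (Int.self_sub_fract _).symm
  set m : ℤ := ⌊K1 - t⌋ with hmdef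
  set K2 : ℝ := if t' < A then A + T else if t' < A + B then 2*A + B + T
      else A + B + 1 + T with hK2
  have hx2 : FF A B T (FF A B T x) = toCirc (K2 - t') := FF_eq A B T (FF A B T x)
  have heq : Int.fract (K2 - t') = t := by
    have : rep (toCirc (K2 - t')) = t := by rw [← hx2, hx]
    rwa [rep_toCirc] at this
  have hm' : ((⌊K2 - t'⌋ : ℤ) : ℝ) = K2 - t' - t := by
    have := Int.self_sub_fract (K2 - t')
    rw [heq] at this; exact_mod_cast this.symm
  set m' : ℤ := ⌊K2 - t'⌋ with hm'def
  -- case analysis on the branches of t and t'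
  by_cases h1 : t < A
  · exfalso
    by_cases h1' : t' < A
    · -- both in branch 1 : integer strictly between 0 and 1
      rw [hK1, if_pos h1] at hm
      have e0 : (0:ℝ) < (m:ℝ) := by rw [hm]; linarith
      have e1 : (m:ℝ) < 1 := by rw [hm]; linarith
      have e0' : 0 < m := by exact_mod_cast e0
      have e1' : m < 1 := by exact_mod_cast e1
      omega
    · by_cases h2' : t' < A + B
      · -- K2 - K1 = A + B ∈ (0,1)
        rw [hK1, if_pos h1] at hm
        rw [hK2, if_neg h1', if_pos h2'] at hm'
        have e0 : (0:ℝ) < ((m' - m : ℤ) : ℝ) := by push_cast; linarith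
        have e1 : ((m' - m : ℤ) : ℝ) < 1 := by push_cast; linarith
        have e0' : 0 < m' - m := by exact_mod_cast e0
        have e1' : m' - m < 1 := by exact_mod_cast e1
        omega
      · -- K2 - K1 = B + 1 ∈ (1,2)
        rw [hK1, if_pos h1] at hm
        rw [hK2, if_neg h1', if_neg h2'] at hm'
        have e0 : (1:ℝ) < ((m' - m : ℤ) : ℝ) := by push_cast; linarith
        have e1 : ((m' - m : ℤ) : ℝ) < 2 := by push_cast; linarith
        have e0' : 1 < m' - m := by exact_mod_cast e0
        have e1' : m' - m < 2 := by exact_mod_cast e1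
        omega
  · by_cases h2 : t < A + B
    · exfalso
      by_cases h1' : t' < A
      · -- K2 - K1 = -(A+B)
        rw [hK1, if_neg h1, if_pos h2] at hm
        rw [hK2, if_pos h1'] at hm'
        have e0 : (-1:ℝ) < ((m' - m : ℤ) : ℝ) := by push_cast; linarith
        have e1 : ((m' - m : ℤ) : ℝ) < 0 := by push_cast; linarith
        have e0' : -1 < m' - m := by exact_mod_cast e0
        have e1' : m' - m < 0 := by exact_mod_cast e1
        omega
      · by_cases h2' : t' < A + B
        · -- both in branch 2
          rw [hK1, if_neg h1, if_pos h2] at hm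
          have e0 : (0:ℝ) < (m:ℝ) := by rw [hm]; linarith
          have e1 : (m:ℝ) < 1 := by rw [hm]; linarith
          have e0' : 0 < m := by exact_mod_cast e0
          have e1' : m < 1 := by exact_mod_cast e1
          omega
        · -- K2 - K1 = 1 - A ∈ (0,1)
          rw [hK1, if_neg h1, if_pos h2] at hm
          rw [hK2, if_neg h1', if_neg h2'] at hm'
          have e0 : (0:ℝ) < ((m' - m : ℤ) : ℝ) := by push_cast; linarith
          have e1 : ((m' - m : ℤ) : ℝ) < 1 := by push_cast; linarith
          have e0' : 0 < m' - m := by exact_mod_cast e0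
          have e1' : m' - m < 1 := by exact_mod_cast e1
          omega
    · by_cases h1' : t' < A
      · exfalso
        -- K2 - K1 = -(B+1)
        rw [hK1, if_neg h1, if_neg h2] at hm
        rw [hK2, if_pos h1'] at hm'
        have e0 : (-2:ℝ) < ((m' - m : ℤ) : ℝ) := by push_cast; linarith
        have e1 : ((m' - m : ℤ) : ℝ) < -1 := by push_cast; linarith
        have e0' : -2 < m' - m := by exact_mod_cast e0
        have e1' : m' - m < -1 := by exact_mod_cast e1
        omega
      · by_cases h2' : t' < A + B
        · exfalso
          -- K2 - K1 = A - 1 ∈ (-1,0)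
          rw [hK1, if_neg h1, if_neg h2] at hm
          rw [hK2, if_neg h1', if_pos h2'] at hm'
          have e0 : (-1:ℝ) < ((m' - m : ℤ) : ℝ) := by push_cast; linarith
          have e1 : ((m' - m : ℤ) : ℝ) < 0 := by push_cast; linarith
          have e0' : -1 < m' - m := by exact_mod_cast e0
          have e1' : m' - m < 0 := by exact_mod_cast e1
          omega
        · -- both in branch 3 : forces t = 1/2
          rw [hK1, if_neg h1, if_neg h2] at hm
          push_neg at h1 h2 h1' h2'
          have e0 : (0:ℝ) < (m:ℝ) := by rw [hm]; linarith
          have e1 : (m:ℝ) < 2 := by rw [hm]; linarith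
          have e0' : 0 < m := by exact_mod_cast e0
          have e1' : m < 2 := by exact_mod_cast e1
          have hm1 : m = 1 := by omega
          have hmr : (m:ℝ) = 1 := by exact_mod_cast hm1
          rw [hmr] at hm
          -- t + t' = A + B + T, with t,t' ≥ A+B ≥ 1-T and t ≤ T ≤ 1/2
          have hup : t ≤ T := by linarith
          have hlo : 1 - T ≤ t := by linarith
          linarith

/-- The renormalized map `F' = F_{τ'}^{l1',l2',l3'}` has a `2`-periodic interval iff
`l3 > 1/4 - r/2`, where `r = 1/2 - τ`. -/
theorem statement6 (l1 l2 l3 τ : ℝ)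
    (h1 : 0 < l1) (h2 : 0 < l2) (h3 : 0 < l3) (hsum : l1 + l2 + l3 = 1)
    (h31 : l3 < l1) (h32 : l3 < l2) (hτmax : max l1 l2 < τ) (hτ : τ ≤ 1/2) :
    (∃ I : Set (AddCircle (1:ℝ)), IsOpenArc I ∧
        ∀ x ∈ I, FF ((l1 - l3)/(1 - 2*l3)) ((l2 - l3)/(1 - 2*l3)) ((τ - l3)/(1 - 2*l3))
          (FF ((l1 - l3)/(1 - 2*l3)) ((l2 - l3)/(1 - 2*l3)) ((τ - l3)/(1 - 2*l3)) x)
            = x) ↔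
      1/4 - (1/2 - τ)/2 < l3 := by
  have hl1τ : l1 < τ := lt_of_le_of_lt (le_max_left l1 l2) hτmax
  have hl2τ : l2 < τ := lt_of_le_of_lt (le_max_right l1 l2) hτmax
  have hD : (0:ℝ) < 1 - 2*l3 := by linarith
  set D : ℝ := 1 - 2*l3 with hDdef
  set A : ℝ := (l1 - l3)/D with hAdef
  set B : ℝ := (l2 - l3)/D with hBdef
  set T : ℝ := (τ - l3)/D with hTdef
  have hA : 0 < A := div_pos (by linarith) hD
  have hB : 0 < B := div_pos (by linarith) hD
  have hABsum : A + B = (l1 + l2 - 2*l3)/D := by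
    rw [hAdef, hBdef, ← add_div]; ring_nf
  have hAB : A + B < 1 := by
    rw [hABsum, div_lt_one hD]; linarith
  have hTA : A < T := by
    rw [hAdef, hTdef, div_lt_div_iff_of_pos_right hD]; linarith
  have hTB : B < T := by
    rw [hBdef, hTdef, div_lt_div_iff_of_pos_right hD]; linarith
  have hT : T ≤ 1/2 := by
    rw [hTdef, div_le_iff₀ hD]; linarith
  have hC : 1 - A - B = l3/D := by
    rw [hAdef, hBdef]
    field_simp
    linarith
  constructor
  · -- arc exists → τ/2 < l3
    rintro ⟨I, ⟨a, b, hab, hba, rfl⟩, hI⟩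
    by_contra hcon
    push_neg at hcon
    have hTC : 1 - A - B ≤ T := by
      rw [hC, hTdef, div_le_div_iff_of_pos_right hD]; linarith
    have hs1 : a + (b-a)/3 ∈ Ioo a b := by constructor <;> [linarith; linarith]
    have hs2 : a + (b-a)/2 ∈ Ioo a b := by constructor <;> [linarith; linarith]
    have k1 := key A B T hA hB hAB hTA hTB hT hTC (toCirc (a + (b-a)/3))
      (hI _ ⟨_, hs1, rfl⟩)
    have k2 := key A B T hA hB hAB hTA hTB hT hTC (toCirc (a + (b-a)/2))
      (hI _ ⟨_, hs2, rfl⟩)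
    rw [rep_toCirc] at k1 k2
    have f1 : a + (b-a)/3 - ⌊a + (b-a)/3⌋ = 1/2 := by
      rw [Int.self_sub_floor]; exact k1
    have f2 : a + (b-a)/2 - ⌊a + (b-a)/2⌋ = 1/2 := by
      rw [Int.self_sub_floor]; exact k2
    have e0 : (0:ℝ) < ((⌊a + (b-a)/2⌋ - ⌊a + (b-a)/3⌋ : ℤ) : ℝ) := by
      push_cast; linarith
    have e1 : ((⌊a + (b-a)/2⌋ - ⌊a + (b-a)/3⌋ : ℤ) : ℝ) < 1 := by
      push_cast; linarith
    have e0' : 0 < ⌊a + (b-a)/2⌋ - ⌊a + (b-a)/3⌋ := by exact_mod_cast e0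
    have e1' : ⌊a + (b-a)/2⌋ - ⌊a + (b-a)/3⌋ < 1 := by exact_mod_cast e1
    omega
  · -- τ/2 < l3 → arc exists
    intro hlt
    have hTC : T < 1 - A - B := by
      rw [hC, hTdef, div_lt_div_iff_of_pos_right hD]; linarith
    set p : ℝ := (1 + A + B + T)/2 with hpdef
    set δ : ℝ := (1 - A - B - T)/4 with hδdef
    have hδ : 0 < δ := by rw [hδdef]; linarith
    have hlow : A + B < p - δ := by rw [hpdef, hδdef]; linarith
    have hhigh : p + δ < 1 := by rw [hpdef, hδdef]; linarith
    refine ⟨toCirc '' Ioo (p - δ) (p + δ), ⟨p - δ, p + δ, by linarith, ?_, rfl⟩, ?_⟩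
    · rw [hδdef]; linarith
    rintro x ⟨s, hs, rfl⟩
    obtain ⟨hs1, hs2⟩ := hs
    have hs0 : 0 ≤ s := by linarith
    have hslt1 : s < 1 := by linarith
    have hsAB : A + B ≤ s := by linarith
    have FF1 : FF A B T (toCirc s) = toCirc (A + B + 1 - s + T) := by
      unfold FF
      rw [rep_toCirc, Int.fract_eq_self.mpr ⟨hs0, hslt1⟩,
        if_neg (by push_neg; linarith), if_neg (by push_neg; linarith)]
    set s2 : ℝ := A + B + 1 - s + T with hs2def
    have hs2range : p - δ < s2 ∧ s2 < p + δ := by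
      constructor <;> [rw [hs2def, hpdef]; rw [hs2def, hpdef]] <;> linarith
    have hs20 : 0 ≤ s2 := by linarith [hs2range.1, hlow, hA.le, hB.le]
    have hs21 : s2 < 1 := by linarith [hs2range.2]
    have hs2AB : A + B ≤ s2 := by linarith [hs2range.1]
    have FF2 : FF A B T (toCirc s2) = toCirc (A + B + 1 - s2 + T) := by
      unfold FF
      rw [rep_toCirc, Int.fract_eq_self.mpr ⟨hs20, hs21⟩,
        if_neg (by push_neg; linarith), if_neg (by push_neg; linarith)]
    rw [FF1, FF2]
    congr 1
    rw [hs2def]; ring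

end
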